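/- arXiv:2512.11946 — 2 statements merged into one kernel-verified Lean document; each statement's English description precedes it below -/
import Mathlib

section
/- If f(x,y) = Σ_{ℓ=1}^k g_ℓ(x) h_ℓ(y) with x and y independent (g_ℓ square-integrable in x, h_ℓ integrable in y with appropriate integrability), then E_y[sqrt(Var_x[f(x,y)])] ≥ sqrt(Var_x[E_y[f(x,y)]]). In particular, the PDP feature importance is a lower bound on the expected ICE feature importance for any function expressible as a finite linear combination of tensor-product basis functions (e.g., any truncated polynomial chaos expansion). -/
open MeasureTheory ProbabilityTheory
open scoped ENNReal

/-!
Centre each `g ℓ` in `L²(μ)`. The standard deviation of `x ↦ Σ g ℓ x * c ℓ` is then the `L²` norm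
of `Σ c ℓ • (g ℓ - 𝔼[g ℓ])`, so the ICE importance at `y` is `‖Φ y‖` for the `L²(μ)`-valued map
`Φ y = Σ h ℓ y • (g ℓ - 𝔼[g ℓ])`, and, `Φ` being linear in the `h ℓ`, the PDP importance is
`‖∫ Φ dν‖`. The inequality is `‖∫ Φ dν‖ ≤ ∫ ‖Φ‖ dν`.
-/

theorem MeasureTheory.MemLp.toLp_finsetSum {α E ι : Type*} [MeasurableSpace α] {μ : Measure α}
    [NormedAddCommGroup E] {p : ℝ≥0∞} (s : Finset ι) {f : ι → α → E}
    (hf : ∀ i, MemLp (f i) p μ) :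
    (memLp_finsetSum' s fun i _ => hf i).toLp (∑ i ∈ s, f i) = ∑ i ∈ s, (hf i).toLp (f i) := by
  classical
  induction s using Finset.induction_on with
  | empty => simp only [Finset.sum_empty]; rfl
  | insert a s ha ih =>
    simp only [Finset.sum_insert ha, ← ih]
    exact (hf a).toLp_add (memLp_finsetSum' s fun i _ => hf i)

namespace ProbabilityTheory

variable {Ω : Type*} [MeasurableSpace Ω] {μ : Measure Ω} [IsFiniteMeasure μ] {X : Ω → ℝ}

noncomputable def centeredL2 (hX : MemLp X 2 μ) : Lp ℝ 2 μ :=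
  (hX.sub (memLp_const μ[X])).toLp fun ω => X ω - μ[X]

lemma coeFn_centeredL2 (hX : MemLp X 2 μ) : centeredL2 hX =ᵐ[μ] fun ω => X ω - μ[X] :=
  MemLp.coeFn_toLp _

lemma sqrt_variance_eq_norm_centeredL2 (hX : MemLp X 2 μ) : √Var[X; μ] = ‖centeredL2 hX‖ := by
  suffices Var[X; μ] = ‖centeredL2 hX‖ ^ 2 by rw [this, Real.sqrt_sq (norm_nonneg _)]
  rw [variance_eq_integral hX.aemeasurable, ← real_inner_self_eq_norm_sq, L2.inner_def]
  refine integral_congr_ae ?_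
  filter_upwards [coeFn_centeredL2 hX] with ω hω
  simp [hω, sq]

lemma centeredL2_finsetSum_mul {ι : Type*} (s : Finset ι) {g : ι → Ω → ℝ}
    (hg : ∀ i, MemLp (g i) 2 μ) (c : ι → ℝ) :
    centeredL2 (memLp_finsetSum s fun i _ => (hg i).mul_const (c i)) =
      ∑ i ∈ s, c i • centeredL2 (hg i) := by
  have hcentered : (fun ω => ∑ i ∈ s, g i ω * c i - μ[fun ω => ∑ i ∈ s, g i ω * c i]) =
      ∑ i ∈ s, c i • fun ω => g i ω - μ[g i] := by
    ext ω
    rw [integral_finsetSum s fun i _ => ((hg i).integrable one_le_two).mul_const (c i)]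
    simp only [integral_mul_const, Finset.sum_apply, Pi.smul_apply, smul_eq_mul,
      ← Finset.sum_sub_distrib, mul_sub]
    exact Finset.sum_congr rfl fun i _ => by ring
  have hmem i : MemLp (c i • fun ω => g i ω - μ[g i]) 2 μ :=
    ((hg i).sub (memLp_const μ[g i])).const_smul (c i)
  calc centeredL2 (memLp_finsetSum s fun i _ => (hg i).mul_const (c i))
      = (memLp_finsetSum' s fun i _ => hmem i).toLp (∑ i ∈ s, c i • fun ω => g i ω - μ[g i]) :=
        MemLp.toLp_congr _ _ (.of_eq hcentered)
    _ = ∑ i ∈ s, c i • centeredL2 (hg i) := MemLp.toLp_finsetSum s hmem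

end ProbabilityTheory

theorem ice_ge_pdp_sum_separable_general
    {Ω₁ Ω₂ : Type*} [MeasurableSpace Ω₁] [MeasurableSpace Ω₂]
    (μ : Measure Ω₁) (ν : Measure Ω₂)
    [IsProbabilityMeasure μ]
    {k : ℕ} (g : Fin k → Ω₁ → ℝ) (h : Fin k → Ω₂ → ℝ)
    (hg : ∀ ℓ, MemLp (g ℓ) 2 μ)
    (hh : ∀ ℓ, Integrable (h ℓ) ν) :
    (∫ y, Real.sqrt (variance (fun x => ∑ ℓ, g ℓ x * h ℓ y) μ) ∂ν)
      ≥ Real.sqrt (variance (fun x => ∫ y, ∑ ℓ, g ℓ x * h ℓ y ∂ν) μ) := by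
  have hvar (c : Fin k → ℝ) :
      √Var[fun x => ∑ ℓ, g ℓ x * c ℓ; μ] = ‖∑ ℓ, c ℓ • centeredL2 (hg ℓ)‖ := by
    rw [sqrt_variance_eq_norm_centeredL2 (memLp_finsetSum _ fun ℓ _ => (hg ℓ).mul_const (c ℓ)),
      centeredL2_finsetSum_mul]
  have hpdp : (fun x => ∫ y, ∑ ℓ, g ℓ x * h ℓ y ∂ν) = fun x => ∑ ℓ, g ℓ x * ∫ y, h ℓ y ∂ν := by
    ext x
    rw [integral_finsetSum _ fun ℓ _ => (hh ℓ).const_mul (g ℓ x)]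
    simp only [integral_const_mul]
  calc √Var[fun x => ∫ y, ∑ ℓ, g ℓ x * h ℓ y ∂ν; μ]
      = ‖∑ ℓ, (∫ y, h ℓ y ∂ν) • centeredL2 (hg ℓ)‖ := by rw [hpdp, hvar]
    _ = ‖∫ y, ∑ ℓ, h ℓ y • centeredL2 (hg ℓ) ∂ν‖ := by
        rw [integral_finsetSum _ fun ℓ _ => (hh ℓ).smul_const _]
        simp only [integral_smul_const]
    _ ≤ ∫ y, ‖∑ ℓ, h ℓ y • centeredL2 (hg ℓ)‖ ∂ν := norm_integral_le_integral_norm _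
    _ = ∫ y, √Var[fun x => ∑ ℓ, g ℓ x * h ℓ y; μ] ∂ν := by simp only [hvar]

/-- For `f(x,y) = Σ_ℓ g_ℓ(x) h_ℓ(y)` with independent `x`, `y`, the expected
ICE importance dominates the PDP importance:
`E_y[sqrt(Var_x f(x,y))] ≥ sqrt(Var_x[E_y f(x,y)])`. -/
theorem ice_ge_pdp_sum_separable
    {Ω₁ Ω₂ : Type*} [MeasurableSpace Ω₁] [MeasurableSpace Ω₂]
    (μ : Measure Ω₁) (ν : Measure Ω₂)
    [IsProbabilityMeasure μ] [IsProbabilityMeasure ν]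
    {k : ℕ} (g : Fin k → Ω₁ → ℝ) (h : Fin k → Ω₂ → ℝ)
    (hg : ∀ ℓ, MemLp (g ℓ) 2 μ)
    (hh : ∀ ℓ, Integrable (h ℓ) ν)
    (hh2 : ∀ ℓ r, Integrable (fun y => h ℓ y * h r y) ν) :
    (∫ y, Real.sqrt (variance (fun x => ∑ ℓ, g ℓ x * h ℓ y) μ) ∂ν)
      ≥ Real.sqrt (variance (fun x => ∫ y, ∑ ℓ, g ℓ x * h ℓ y ∂ν) μ) :=
  ice_ge_pdp_sum_separable_general μ ν g h hg hh
end

section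
/- If f(x,y) = g(x)h(y) with x, y independent and E_y[h(y)] = 0 but h not identically zero, and g is non-constant, then the PDP importance of x is zero while the expected ICE importance is strictly positive: sqrt(Var_x[E_y f(x,y)]) = 0 < E_y[|h(y)|]·sqrt(Var_x[g(x)]) = E_y[sqrt(Var_x[f(x,y)])]. -/
open MeasureTheory ProbabilityTheory

/-! Since `E_y[h] = 0`, the partial dependence `x ↦ E_y[g x * h y] = g x * E_y[h]` is identically
zero, so it has no variance. For fixed `y`, the ICE curve `x ↦ g x * h y` is a rescaling of `g`,
so its standard deviation is `|h y| * sd(g)`; integrating over `y` gives `E_y[|h|] * sd(g)`, which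
is positive because `h` is not a.e. zero and `g` is non-constant. -/

section

variable {Ω₁ Ω₂ : Type*} [MeasurableSpace Ω₁] [MeasurableSpace Ω₂]

lemma sqrt_variance_mul_const (X : Ω₁ → ℝ) (c : ℝ) (μ : Measure Ω₁) :
    Real.sqrt (variance (fun ω => X ω * c) μ) = |c| * Real.sqrt (variance X μ) := by
  rw [variance_mul_const, Real.sqrt_mul (variance_nonneg X μ), Real.sqrt_sq_eq_abs, mul_comm]

lemma integral_abs_pos_of_not_ae_eq_zero {μ : Measure Ω₂} {f : Ω₂ → ℝ} (hf : Integrable f μ)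
    (hne : ¬ ∀ᵐ x ∂μ, f x = 0) : 0 < ∫ x, |f x| ∂μ := by
  refine (integral_nonneg fun x => abs_nonneg (f x)).lt_of_ne' fun hzero => hne ?_
  filter_upwards [(integral_eq_zero_iff_of_nonneg (fun x => abs_nonneg (f x)) hf.abs).mp hzero]
    with x hx using abs_eq_zero.mp hx

lemma variance_integral_mul_eq_zero_of_integral_eq_zero (μ : Measure Ω₁) (ν : Measure Ω₂)
    (g : Ω₁ → ℝ) {h : Ω₂ → ℝ} (hmean : ∫ y, h y ∂ν = 0) :
    variance (fun x => ∫ y, g x * h y ∂ν) μ = 0 := by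
  have hpdp : (fun x => ∫ y, g x * h y ∂ν) = 0 := by
    funext x
    rw [integral_const_mul, hmean, mul_zero, Pi.zero_apply]
  rw [hpdp, variance_zero]

lemma integral_sqrt_variance_mul (μ : Measure Ω₁) (ν : Measure Ω₂) (g : Ω₁ → ℝ) (h : Ω₂ → ℝ) :
    ∫ y, Real.sqrt (variance (fun x => g x * h y) μ) ∂ν
      = (∫ y, |h y| ∂ν) * Real.sqrt (variance g μ) := by
  simp_rw [sqrt_variance_mul_const, integral_mul_const]

end

theorem pdp_zero_ice_positive_pure_interaction_general
    {Ω₁ Ω₂ : Type*} [MeasurableSpace Ω₁] [MeasurableSpace Ω₂]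
    (μ : Measure Ω₁) (ν : Measure Ω₂)
    (g : Ω₁ → ℝ) (h : Ω₂ → ℝ)
    (hgvar : 0 < variance g μ)
    (hh : Integrable h ν) (hmean : (∫ y, h y ∂ν) = 0)
    (hne : ¬ (∀ᵐ y ∂ν, h y = 0)) :
    Real.sqrt (variance (fun x => ∫ y, g x * h y ∂ν) μ) = 0 ∧
      0 < (∫ y, |h y| ∂ν) * Real.sqrt (variance g μ) ∧
      (∫ y, |h y| ∂ν) * Real.sqrt (variance g μ)
        = ∫ y, Real.sqrt (variance (fun x => g x * h y) μ) ∂ν := by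
  refine ⟨?_, ?_, (integral_sqrt_variance_mul μ ν g h).symm⟩
  · rw [variance_integral_mul_eq_zero_of_integral_eq_zero μ ν g hmean, Real.sqrt_zero]
  · exact mul_pos (integral_abs_pos_of_not_ae_eq_zero hh hne) (Real.sqrt_pos.mpr hgvar)

/-- Strict gap for a pure interaction term: if `f(x,y) = g(x)h(y)` with
`E[h] = 0`, `h` not a.e. zero and `g` non-constant, the PDP importance of `x`
is zero while the expected ICE importance `E_y[|h|]·sd(g)` is strictly
positive. -/
theorem pdp_zero_ice_positive_pure_interaction
    {Ω₁ Ω₂ : Type*} [MeasurableSpace Ω₁] [MeasurableSpace Ω₂]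
    (μ : Measure Ω₁) (ν : Measure Ω₂)
    [IsProbabilityMeasure μ] [IsProbabilityMeasure ν]
    (g : Ω₁ → ℝ) (h : Ω₂ → ℝ)
    (hg : MemLp g 2 μ) (hgvar : 0 < variance g μ)
    (hh : Integrable h ν) (hmean : (∫ y, h y ∂ν) = 0)
    (hne : ¬ (∀ᵐ y ∂ν, h y = 0)) :
    Real.sqrt (variance (fun x => ∫ y, g x * h y ∂ν) μ) = 0 ∧
      0 < (∫ y, |h y| ∂ν) * Real.sqrt (variance g μ) ∧
      (∫ y, |h y| ∂ν) * Real.sqrt (variance g μ)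
        = ∫ y, Real.sqrt (variance (fun x => g x * h y) μ) ∂ν :=
  pdp_zero_ice_positive_pure_interaction_general μ ν g h hgvar hh hmean hne
end
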